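/- Assume in addition that V_{d+2}^n = (|v|² − 1)/‖ |v|² − 1 ‖. Then the function E^n · j^n = Σ_s E_s^n j_s^n lies in the linear span of { X_i^n, ∂_{x_t}X_i^n, K_i^{n+1} : 1 ≤ i ≤ r, 1 ≤ t ≤ d }; in particular E^n · j^n lies in the span of the augmented basis { X̃_k^{n+1} }, so that Σ_k ⟨X̃_k^{n+1}, E^n · j^n⟩_x X̃_k^{n+1} = E^n · j^n. -/

import Mathlib

open MeasureTheory Real Set

noncomputable section

/-- Partial derivative of `u` in the `i`-th coordinate direction. -/
def pd {d : ℕ} (i : Fin d) (u : (Fin d → ℝ) → ℝ) (x : Fin d → ℝ) : ℝ :=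
  fderiv ℝ u x (Pi.single i 1)

/-- Gaussian weight `f_{0v}(v) = exp(-|v|²/2)`. -/
def f0v {d : ℕ} (v : Fin d → ℝ) : ℝ := Real.exp (-(∑ i, v i ^ 2) / 2)

/-- Fundamental domain of the `d`-dimensional torus `Ω_x`. -/
def cube (d : ℕ) : Set (Fin d → ℝ) := Set.univ.pi fun _ => Set.Ioc (0 : ℝ) 1

/-- `L²(Ω_x)` inner product. -/
def ipx {d : ℕ} (u w : (Fin d → ℝ) → ℝ) : ℝ := ∫ x in cube d, u x * w x

/-- Weighted inner product `⟨u,w⟩_v = ∫ f_{0v} u w dv`. -/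
def ipv {d : ℕ} (u w : (Fin d → ℝ) → ℝ) : ℝ := ∫ v, f0v v * u v * w v

/-- Weighted norm `‖w‖ = ⟨w,w⟩_v^{1/2}`. -/
def nv {d : ℕ} (w : (Fin d → ℝ) → ℝ) : ℝ := Real.sqrt (ipv w w)

/-- Periodicity with period 1 in each coordinate (functions on the torus). -/
def Per {d : ℕ} (u : (Fin d → ℝ) → ℝ) : Prop := ∀ x i, u (x + Pi.single i 1) = u x

/-- All (iterated) derivatives have at most polynomial growth. -/
def PolyAll {d : ℕ} (g : (Fin d → ℝ) → ℝ) : Prop :=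
  ∀ n : ℕ, ∃ (C : ℝ) (p : ℕ), ∀ v, ‖iteratedFDeriv ℝ n g v‖ ≤ C * (1 + ‖v‖) ^ p

/-!
Test the K-step against `V_{d+2} = (|v|² - 1) / c`, for which `∂_{v_s} V_{d+2} = 2 v_s / c`.
Integrating the force term `E · ∇_v f` by parts against `V_{d+2}` gives `-(2 / c) E · j`, while the
transport term `v · ∇_x f` gives `∑ m_{is} ∂_{x_s} X_i` with constants
`m_{is} = ⟨V_{d+2}, v_s ∑_j S_{ij} V_j⟩_v`. Hence
`K_{d+2}^{n+1} - K_{d+2}^n = -τ (∑ m_{is} ∂_{x_s} X_i + (2 / c) E · j)`, which can be solved for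
`E · j` (`c ≠ 0` because `V_{d+2}` has norm one). The Gaussian factor of `f` beats the polynomial
growth of the `V_j`, which makes every integrand integrable and leaves no boundary terms. The
projection identity is then the orthonormal expansion of an element of the span of the `X̃_k`.
-/

open Function (HasTemperateGrowth)

section GaussianWeight

variable {d : ℕ}

lemma contDiff_f0v : ContDiff ℝ ⊤ (f0v (d := d)) := by
  unfold f0v; fun_prop

lemma f0v_nonneg (v : Fin d → ℝ) : 0 ≤ f0v v := exp_nonneg _

lemma norm_sq_le_sum_sq (v : Fin d → ℝ) : ‖v‖ ^ 2 ≤ ∑ i, v i ^ 2 := by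
  have hnorm : ‖v‖ ≤ √(∑ i, v i ^ 2) := by
    refine (pi_norm_le_iff_of_nonneg (Real.sqrt_nonneg _)).2 fun i => ?_
    rw [Real.norm_eq_abs, ← Real.sqrt_sq_eq_abs]
    exact Real.sqrt_le_sqrt (Finset.single_le_sum (fun j _ => sq_nonneg (v j)) (Finset.mem_univ i))
  calc ‖v‖ ^ 2 ≤ √(∑ i, v i ^ 2) ^ 2 := pow_le_pow_left₀ (norm_nonneg _) hnorm 2
    _ = ∑ i, v i ^ 2 := Real.sq_sqrt (Finset.sum_nonneg fun i _ => sq_nonneg _)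

lemma f0v_le_exp_neg_norm_sq (v : Fin d → ℝ) : f0v v ≤ exp (-‖v‖ ^ 2 / 2) := by
  unfold f0v
  gcongr
  exact norm_sq_le_sum_sq v

lemma one_add_pow_mul_exp_neg_sq_le (N : ℕ) {t : ℝ} (ht : 0 ≤ t) :
    (1 + t) ^ N * exp (-t ^ 2 / 2) ≤ exp (N ^ 2 / 2) := by
  calc (1 + t) ^ N * exp (-t ^ 2 / 2) ≤ exp t ^ N * exp (-t ^ 2 / 2) := by
        gcongr
        linarith [add_one_le_exp t]
    _ = exp (N * t - t ^ 2 / 2) := by rw [← exp_nat_mul, ← exp_add]; ring_nf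
    _ ≤ exp (N ^ 2 / 2) := by gcongr; nlinarith [sq_nonneg (t - N)]

lemma one_add_norm_pow_mul_f0v_le (N : ℕ) (v : Fin d → ℝ) :
    (1 + ‖v‖) ^ N * f0v v ≤ exp (N ^ 2 / 2) :=
  (mul_le_mul_of_nonneg_left (f0v_le_exp_neg_norm_sq v) (by positivity)).trans
    (one_add_pow_mul_exp_neg_sq_le N (norm_nonneg v))

lemma integrable_f0v_mul {g : (Fin d → ℝ) → ℝ} (hg : AEStronglyMeasurable g) {C : ℝ} {k : ℕ}
    (hbound : ∀ v, |g v| ≤ C * (1 + ‖v‖) ^ k) : Integrable (fun v => f0v v * g v) := by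
  have hC : 0 ≤ C := (abs_nonneg _).trans ((hbound 0).trans_eq (by simp))
  refine ((integrable_one_add_norm (E := Fin d → ℝ) (μ := volume) (r := (d + 1 : ℕ))
    (by simp)).const_mul (C * exp ((k + (d + 1) : ℕ) ^ 2 / 2))).mono'
    (contDiff_f0v.continuous.aestronglyMeasurable.mul hg) (.of_forall fun v => ?_)
  have hpos : 0 < (1 + ‖v‖) ^ (d + 1) := by positivity
  rw [Real.rpow_neg (by positivity), Real.rpow_natCast, Real.norm_eq_abs, abs_mul,
    abs_of_nonneg (f0v_nonneg v), ← div_eq_mul_inv, le_div_iff₀ hpos]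
  calc f0v v * |g v| * (1 + ‖v‖) ^ (d + 1)
      ≤ f0v v * (C * (1 + ‖v‖) ^ k) * (1 + ‖v‖) ^ (d + 1) :=
        mul_le_mul_of_nonneg_right (mul_le_mul_of_nonneg_left (hbound v) (f0v_nonneg v)) hpos.le
    _ = C * ((1 + ‖v‖) ^ (k + (d + 1)) * f0v v) := by ring
    _ ≤ C * exp ((k + (d + 1) : ℕ) ^ 2 / 2) := by
        gcongr; exact one_add_norm_pow_mul_f0v_le _ v

lemma Function.HasTemperateGrowth.integrable_f0v_mul {g : (Fin d → ℝ) → ℝ}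
    (hg : g.HasTemperateGrowth) : Integrable (fun v => f0v v * g v) := by
  obtain ⟨k, C, hbound⟩ := hg.2 0
  exact _root_.integrable_f0v_mul hg.1.continuous.aestronglyMeasurable
    fun v => by simpa using hbound v

end GaussianWeight

section Derivatives

variable {d : ℕ}

lemma hasFDerivAt_sum_sq (v : Fin d → ℝ) : HasFDerivAt (fun v : Fin d → ℝ => ∑ i, v i ^ 2)
      (∑ i, (2 * v i) • ContinuousLinearMap.proj (R := ℝ) (φ := fun _ : Fin d => ℝ) i) v :=
  HasFDerivAt.fun_sum fun i _ => by simpa using (hasFDerivAt_apply (𝕜 := ℝ) i v).pow 2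

lemma pd_sum_sq_sub_one_div (c : ℝ) (s : Fin d) (v : Fin d → ℝ) :
    pd s (fun v => (∑ i, v i ^ 2 - 1) / c) v = 2 / c * v s := by
  have h := ((hasFDerivAt_sum_sq v).sub_const 1).mul_const c⁻¹
  simp only [div_eq_mul_inv]
  rw [pd, h.fderiv]
  simp [Pi.single_apply]
  ring

lemma pd_f0v (s : Fin d) (v : Fin d → ℝ) : pd s f0v v = -v s * f0v v := by
  have h := (((hasFDerivAt_sum_sq v).fun_neg).mul_const (2⁻¹ : ℝ)).exp
  unfold f0v
  simp only [div_eq_mul_inv]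
  rw [pd, h.fderiv]
  simp [Pi.single_apply]
  ring

lemma pd_f0v_mul {g : (Fin d → ℝ) → ℝ} {v : Fin d → ℝ} (hg : DifferentiableAt ℝ g v) (s : Fin d) :
    pd s (fun u => f0v u * g u) v = f0v v * (pd s g v - v s * g v) := by
  rw [pd, fderiv_fun_mul (contDiff_f0v.differentiable (by simp)).differentiableAt hg]
  simp only [add_apply, smul_apply, smul_eq_mul]
  rw [← pd, ← pd, pd_f0v]
  ring

lemma Function.HasTemperateGrowth.fderiv_apply {E F : Type*} [NormedAddCommGroup E]
    [NormedSpace ℝ E] [NormedAddCommGroup F] [NormedSpace ℝ F] {g : E → F}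
    (hg : g.HasTemperateGrowth) (w : E) : (fun x => fderiv ℝ g x w).HasTemperateGrowth := by
  have hfderiv : (fderiv ℝ g).HasTemperateGrowth := by
    refine ⟨hg.1.fderiv_right (by simp), fun n => ?_⟩
    obtain ⟨k, C, h⟩ := hg.2 (n + 1)
    exact ⟨k, C, fun x => by simpa [norm_iteratedFDeriv_fderiv] using h x⟩
  exact (ContinuousLinearMap.apply ℝ F w).hasTemperateGrowth.comp hfderiv

@[fun_prop]
lemma hasTemperateGrowth_apply (s : Fin d) : HasTemperateGrowth (fun v : Fin d → ℝ => v s) :=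
  (ContinuousLinearMap.proj (R := ℝ) (φ := fun _ : Fin d => ℝ) s).hasTemperateGrowth

@[fun_prop]
lemma Function.HasTemperateGrowth.pd {g : (Fin d → ℝ) → ℝ} (hg : g.HasTemperateGrowth)
    (s : Fin d) : (pd s g).HasTemperateGrowth :=
  hg.fderiv_apply _

lemma hasTemperateGrowth_of_polyAll {g : (Fin d → ℝ) → ℝ} (hg : ContDiff ℝ (⊤ : ℕ∞) g)
    (hpoly : PolyAll g) : g.HasTemperateGrowth :=
  ⟨hg, fun n => let ⟨C, p, h⟩ := hpoly n; ⟨p, C, h⟩⟩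

end Derivatives

section IntegrationByParts

variable {d : ℕ} {w g : (Fin d → ℝ) → ℝ}

lemma integrable_mul_pd_f0v_mul (hw : w.HasTemperateGrowth) (hg : g.HasTemperateGrowth)
    (s : Fin d) : Integrable (fun v => w v * pd s (fun u => f0v u * g u) v) := by
  have hT : (fun v => w v * (pd s g v - v s * g v)).HasTemperateGrowth := by fun_prop
  refine hT.integrable_f0v_mul.congr (.of_forall fun v => ?_)
  simp only [pd_f0v_mul (hg.1.differentiable (by simp)).differentiableAt]
  ring

lemma integral_mul_pd_f0v_mul (hw : w.HasTemperateGrowth) (hg : g.HasTemperateGrowth)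
    (s : Fin d) :
    ∫ v, w v * pd s (fun u => f0v u * g u) v = -∫ v, pd s w v * (f0v v * g v) := by
  have hdiff : ∀ {h : (Fin d → ℝ) → ℝ}, h.HasTemperateGrowth → Differentiable ℝ h :=
    fun h => h.1.differentiable (by simp)
  refine integral_mul_fderiv_eq_neg_fderiv_mul_of_integrable ?_
    (integrable_mul_pd_f0v_mul hw hg s) ?_ (fun v _ => (hdiff hw).differentiableAt)
    (fun v _ => ((contDiff_f0v.differentiable (by simp)).mul (hdiff hg)).differentiableAt)
  · exact ((hw.pd s).mul hg).integrable_f0v_mul.congr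
      (.of_forall fun v => by simp only [Pi.mul_apply, pd]; ring)
  · exact (hw.mul hg).integrable_f0v_mul.congr
      (.of_forall fun v => by simp only [Pi.mul_apply]; ring)

end IntegrationByParts

section VlasovLowRank

variable {d r : ℕ}

def lowRank (X : Fin r → (Fin d → ℝ) → ℝ) (S : Fin r → Fin r → ℝ)
    (V : Fin r → (Fin d → ℝ) → ℝ) (x v : Fin d → ℝ) : ℝ :=
  f0v v * ∑ i, ∑ j, X i x * S i j * V j v

def vlasovRHS (E : (Fin d → ℝ) → Fin d → ℝ) (f : (Fin d → ℝ) → (Fin d → ℝ) → ℝ)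
    (x v : Fin d → ℝ) : ℝ :=
  -(∑ s, v s * pd s (fun y => f y v) x) + ∑ s, E x s * pd s (f x) v

def currentDensity (f : (Fin d → ℝ) → (Fin d → ℝ) → ℝ) (x : Fin d → ℝ) (s : Fin d) : ℝ :=
  ∫ v, v s * f x v

variable {X : Fin r → (Fin d → ℝ) → ℝ} {S : Fin r → Fin r → ℝ} {V : Fin r → (Fin d → ℝ) → ℝ}
  {w : (Fin d → ℝ) → ℝ}

lemma pd_lowRank_left (hX : ∀ i, Differentiable ℝ (X i)) (s : Fin d) (x v : Fin d → ℝ) :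
    pd s (fun y => lowRank X S V y v) x = ∑ i, pd s (X i) x * (f0v v * ∑ j, S i j * V j v) := by
  have hsum : (fun y => lowRank X S V y v) =
      fun y => ∑ i, X i y * (f0v v * ∑ j, S i j * V j v) := by
    funext y
    simp only [lowRank, Finset.mul_sum]
    exact Finset.sum_congr rfl fun i _ => Finset.sum_congr rfl fun j _ => by ring
  rw [hsum, pd, fderiv_fun_sum fun i _ => ((hX i).mul_const _).differentiableAt]
  simp [fderiv_mul_const (hX _).differentiableAt, pd, mul_comm]

lemma integral_mul_pd_lowRank_right (hV : ∀ j, (V j).HasTemperateGrowth)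
    (hw : w.HasTemperateGrowth) {a : ℝ} (hpdw : ∀ s v, pd s w v = a * v s) (s : Fin d)
    (x : Fin d → ℝ) :
    ∫ v, w v * pd s (lowRank X S V x) v = -(a * currentDensity (lowRank X S V) x s) := by
  have hg : (fun v => ∑ i, ∑ j, X i x * S i j * V j v).HasTemperateGrowth := by fun_prop
  calc ∫ v, w v * pd s (lowRank X S V x) v
      = -∫ v, pd s w v * (f0v v * ∑ i, ∑ j, X i x * S i j * V j v) :=
        integral_mul_pd_f0v_mul hw hg s
    _ = -(a * currentDensity (lowRank X S V) x s) := by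
        simp only [hpdw, currentDensity, lowRank, ← integral_const_mul, mul_assoc]

lemma mul_vlasovRHS_lowRank (hX : ∀ i, Differentiable ℝ (X i)) (E : (Fin d → ℝ) → Fin d → ℝ)
    (x v : Fin d → ℝ) :
    w v * vlasovRHS E (lowRank X S V) x v =
      ∑ s, (E x s * (w v * pd s (lowRank X S V x) v)
        - ∑ i, f0v v * w v * (v s * ∑ j, S i j * V j v) * pd s (X i) x) := by
  simp only [vlasovRHS, pd_lowRank_left hX, neg_add_eq_sub, mul_sub, Finset.mul_sum,
    Finset.sum_mul, Finset.sum_sub_distrib]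
  congr 1
  · exact Finset.sum_congr rfl fun s _ => by ring
  · exact Finset.sum_congr rfl fun s _ => Finset.sum_congr rfl fun i _ =>
      Finset.sum_congr rfl fun j _ => by ring

lemma integral_mul_vlasovRHS_lowRank (hX : ∀ i, Differentiable ℝ (X i))
    (hV : ∀ j, (V j).HasTemperateGrowth) (hw : w.HasTemperateGrowth) {a : ℝ}
    (hpdw : ∀ s v, pd s w v = a * v s) (E : (Fin d → ℝ) → Fin d → ℝ) (x : Fin d → ℝ) :
    ∫ v, w v * vlasovRHS E (lowRank X S V) x v =
      -(∑ i, ∑ s, ipv w (fun v => v s * ∑ j, S i j * V j v) * pd s (X i) x)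
        - a * ∑ s, E x s * currentDensity (lowRank X S V) x s := by
  have hforce : ∀ s, Integrable (fun v => w v * pd s (lowRank X S V x) v) := fun s =>
    integrable_mul_pd_f0v_mul hw (by fun_prop) s
  have htransport : ∀ s i, Integrable (fun v => f0v v * w v * (v s * ∑ j, S i j * V j v)) :=
    fun s i => (show (fun v => w v * (v s * ∑ j, S i j * V j v)).HasTemperateGrowth by
      fun_prop).integrable_f0v_mul.congr (.of_forall fun v => by ring)
  calc ∫ v, w v * vlasovRHS E (lowRank X S V) x v
      = ∑ s, (E x s * (∫ v, w v * pd s (lowRank X S V x) v)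
          - ∑ i, ipv w (fun v => v s * ∑ j, S i j * V j v) * pd s (X i) x) := by
        simp only [mul_vlasovRHS_lowRank hX]
        rw [integral_finsetSum _ fun s _ => ((hforce s).const_mul _).sub'
          (integrable_finsetSum _ fun i _ => (htransport s i).mul_const _)]
        refine Finset.sum_congr rfl fun s _ => ?_
        rw [integral_sub ((hforce s).const_mul _)
            (integrable_finsetSum _ fun i _ => (htransport s i).mul_const _),
          integral_const_mul, integral_finsetSum _ fun i _ => (htransport s i).mul_const _]
        simp only [integral_mul_const, ipv]
    _ = _ := by
        simp only [integral_mul_pd_lowRank_right hV hw hpdw, mul_neg, mul_left_comm (E x _) a]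
        rw [Finset.sum_sub_distrib, Finset.sum_comm, Finset.sum_neg_distrib, ← Finset.mul_sum]
        ring

end VlasovLowRank

lemma integrableOn_cube {d : ℕ} {f : (Fin d → ℝ) → ℝ} (hf : Continuous f) :
    IntegrableOn f (cube d) :=
  (hf.continuousOn.integrableOn_compact (isCompact_univ_pi fun _ => isCompact_Icc)).mono_set
    (Set.pi_mono fun _ _ => Set.Ioc_subset_Icc_self)

lemma sum_ipx_mul_eq_of_mem_span {d : ℕ} {ι : Type*} [Fintype ι] [DecidableEq ι]
    {e : ι → (Fin d → ℝ) → ℝ} (he : ∀ k, Continuous (e k))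
    (hon : ∀ k l, ipx (e k) (e l) = if k = l then 1 else 0) {u : (Fin d → ℝ) → ℝ}
    (hu : u ∈ Submodule.span ℝ (Set.range e)) (x : Fin d → ℝ) :
    ∑ k, ipx (e k) u * e k x = u x := by
  obtain ⟨co, rfl⟩ := (Submodule.mem_span_range_iff_exists_fun ℝ).mp hu
  have hcoeff : ∀ k, ipx (e k) (∑ l, co l • e l) = co k := fun k => by
    calc ipx (e k) (∑ l, co l • e l) = ∑ l, co l * ipx (e k) (e l) := by
          simp only [ipx, ← integral_const_mul]
          rw [← integral_finsetSum _ fun l _ =>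
            integrableOn_cube (f := fun y => co l * (e k y * e l y)) (by fun_prop)]
          simp [Finset.sum_apply, Finset.mul_sum, mul_left_comm]
      _ = co k := by simp [hon]
  simp [hcoeff, Finset.sum_apply]

lemma sum_smul_add_sum_smul_add_smul_mem_span {M ι κ μ : Type*} [AddCommGroup M] [Module ℝ M]
    [Fintype ι] [Fintype κ] (u : ι → M) (w : κ → M) (z : μ → M) (α : ι → ℝ) (β : κ → ℝ)
    (γ : ℝ) (k : μ) :
    ∑ i, α i • u i + ∑ p, β p • w p + γ • z k ∈
      Submodule.span ℝ (Set.range u ∪ Set.range w ∪ Set.range z) := by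
  refine add_mem (add_mem (sum_mem fun i _ => Submodule.smul_mem _ _ ?_)
    (sum_mem fun p _ => Submodule.smul_mem _ _ ?_)) (Submodule.smul_mem _ _ ?_) <;>
    exact Submodule.subset_span (by simp)

/-- if `V_{d+2}^n = (|v|²−1)/‖|v|²−1‖`, then `E^n · j^n` lies in the span of
`{X_i^n, ∂_t X_i^n, K_i^{n+1}}`, hence in the span of the augmented basis `{X̃_k^{n+1}}`,
so that its orthonormal expansion in the `X̃_k^{n+1}` reproduces it exactly. -/
theorem Edotj_in_augmented_span
    (d r R : ℕ) (hr : d + 2 ≤ r)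
    (τ : ℝ) (hτ : 0 < τ)
    (S : Fin r → Fin r → ℝ)
    (E : (Fin d → ℝ) → Fin d → ℝ)
    (X : Fin r → (Fin d → ℝ) → ℝ)
    (hXsm : ∀ i, ContDiff ℝ (⊤ : ℕ∞) (X i))
    (V : Fin r → (Fin d → ℝ) → ℝ)
    (hVsm : ∀ j, ContDiff ℝ (⊤ : ℕ∞) (V j)) (hVpoly : ∀ j, PolyAll (V j))
    (hVon : ∀ i j, ipv (V i) (V j) = if i = j then (1 : ℝ) else 0)
    -- the low-rank function f^n and the right-hand side RHS[f^n]
    (fn : (Fin d → ℝ) → (Fin d → ℝ) → ℝ)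
    (hfn : fn = fun x v => f0v v * ∑ i, ∑ j, X i x * S i j * V j v)
    (RHS : (Fin d → ℝ) → (Fin d → ℝ) → ℝ)
    (hRHS : RHS = fun x v =>
      -(∑ s, v s * pd s (fun y => fn y v) x) + ∑ s, E x s * pd s (fn x) v)
    -- the K step: K^{n+1}_k = K^n_k + τ ∫ V_k RHS[f^n] dv
    (K1 : Fin r → (Fin d → ℝ) → ℝ)
    (hK1 : K1 = fun k x => (∑ i, X i x * S i k) + τ * ∫ v, V k v * RHS x v)
    -- the augmented basis X̃^{n+1}: orthonormal, containing X_i, ∂_t X_i and K_i^{n+1}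
    (Xt : Fin R → (Fin d → ℝ) → ℝ)
    (hXtsm : ∀ k, ContDiff ℝ (⊤ : ℕ∞) (Xt k))
    (hXton : ∀ k l, ipx (Xt k) (Xt l) = if k = l then (1 : ℝ) else 0)
    (hspanX : ∀ i, X i ∈ Submodule.span ℝ (Set.range Xt))
    (hspanDX : ∀ i t, pd t (X i) ∈ Submodule.span ℝ (Set.range Xt))
    (hspanK : ∀ i, K1 i ∈ Submodule.span ℝ (Set.range Xt))
    -- the assumption V_{d+2} = (|v|²−1)/‖|v|²−1‖
    (hVd2 : V ⟨d + 1, by omega⟩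
      = fun v => ((∑ i, v i ^ 2) - 1) / nv fun v : Fin d → ℝ => (∑ i, v i ^ 2) - 1)
    -- the moment j^n
    (jn : (Fin d → ℝ) → Fin d → ℝ) (hjn : jn = fun x s => ∫ v, v s * fn x v) :
    (fun x => ∑ s, E x s * jn x s) ∈ Submodule.span ℝ
        (Set.range X ∪ Set.range (fun p : Fin r × Fin d => pd p.2 (X p.1))
          ∪ Set.range K1) ∧
      ∀ x, (∑ k, ipx (Xt k) (fun y => ∑ s, E y s * jn y s) * Xt k x)
        = ∑ s, E x s * jn x s := by
  obtain rfl : fn = lowRank X S V := hfn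
  obtain rfl : RHS = vlasovRHS E (lowRank X S V) := hRHS
  obtain rfl : jn = currentDensity (lowRank X S V) := hjn
  set k0 : Fin r := ⟨d + 1, by omega⟩
  set c := nv fun v : Fin d → ℝ => (∑ i, v i ^ 2) - 1
  have hc : c ≠ 0 := fun hc0 => by simpa [ipv, hVd2, hc0] using hVon k0 k0
  have hX : ∀ i, Differentiable ℝ (X i) := fun i => (hXsm i).differentiable (by simp)
  have hV : ∀ j, (V j).HasTemperateGrowth := fun j =>
    hasTemperateGrowth_of_polyAll (hVsm j) (hVpoly j)
  have hpdV : ∀ s v, pd s (V k0) v = 2 / c * v s := fun s v => by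
    rw [hVd2]; exact pd_sum_sq_sub_one_div c s v
  have hEj : (fun x => ∑ s, E x s * currentDensity (lowRank X S V) x s) =
      ∑ i, (c / (2 * τ) * S i k0) • X i
        + ∑ p : Fin r × Fin d,
            (-(c / 2) * ipv (V k0) (fun v => v p.2 * ∑ j, S p.1 j * V j v)) • pd p.2 (X p.1)
        + (-(c / (2 * τ))) • K1 k0 := by
    funext x
    simp only [hK1, Pi.add_apply, Finset.sum_apply, Pi.smul_apply, smul_eq_mul,
      integral_mul_vlasovRHS_lowRank hX hV (hV k0) hpdV E x, Fintype.sum_prod_type]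
    simp only [mul_assoc (c / (2 * τ)), mul_assoc (-(c / 2)), mul_comm (S _ k0), ← Finset.mul_sum]
    field_simp
    ring
  have hmem := hEj ▸ sum_smul_add_sum_smul_add_smul_mem_span X
    (fun p : Fin r × Fin d => pd p.2 (X p.1)) K1 _ _ _ k0
  refine ⟨hmem, sum_ipx_mul_eq_of_mem_span (fun k => (hXtsm k).continuous) hXton
    (Submodule.span_le.2 ?_ hmem)⟩
  rintro u ((⟨i, rfl⟩ | ⟨⟨i, t⟩, rfl⟩) | ⟨i, rfl⟩)
  exacts [hspanX i, hspanDX i t, hspanK i]
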